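/- Let F : [0,∞) → [0,1] be a cumulative distribution function with finite first moment, and let H : [0,∞) → ℝ be a function of bounded variation that is a finite linear combination of CDFs of non-negative random variables with finite first moments. Define T_a(G) = ∫_0^∞ 2 y G(y) dG(y) for G of bounded variation (Riemann–Stieltjes integral). Then for every real t ≠ 0 one has the exact expansion ( T_a(F + tH) − T_a(F) ) / t = ∫_0^∞ 2 y H(y) dF(y) + ∫_0^∞ 2 y F(y) dH(y) + t ∫_0^∞ 2 y H(y) dH(y), and moreover the remainder satisfies the bound | t ∫_0^∞ 2 y H(y) dH(y) | ≤ 2 |t| C_1 C_2 whenever sup_y |H(y)| ≤ C_1 and |∫_0^∞ y d H(y)| ≤ C_2 for the total-variation decomposition of H; consequently the difference quotient converges to the linear map H ↦ ∫_0^∞ 2 y H(y) dF(y) + ∫_0^∞ 2 y F(y) dH(y) as t → 0, uniformly over sets of H with uniformly bounded sup-norm and uniformly bounded first moment of the total variation. -/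

import Mathlib

open MeasureTheory ProbabilityTheory

/-- A function of bounded variation on `[0,∞)` given as a finite linear combination of
CDFs of non-negative random variables with finite first moments. -/
structure MixCDF where
  /-- number of components -/
  k : ℕ
  /-- coefficients of the linear combination -/
  coef : Fin k → ℝ
  /-- component distributions -/
  meas : Fin k → Measure ℝ
  /-- each component is a probability distribution (a CDF) -/
  prob : ∀ i, IsProbabilityMeasure (meas i)
  /-- each component distribution is that of a non-negative random variable -/
  supp : ∀ i, meas i (Set.Iio 0) = 0
  /-- each component has a finite first moment -/
  moment : ∀ i, Integrable (fun y : ℝ => y) (meas i)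

/-- The function `H : ℝ → ℝ` represented by a `MixCDF`. -/
noncomputable def MixCDF.fn (H : MixCDF) (y : ℝ) : ℝ :=
  ∑ i, H.coef i * (H.meas i (Set.Iic y)).toReal

/-- The Riemann–Stieltjes integral `∫_0^∞ g(y) dH(y)` for a `MixCDF` `H`. -/
noncomputable def MixCDF.integral (H : MixCDF) (g : ℝ → ℝ) : ℝ :=
  ∑ i, H.coef i * ∫ y, g y ∂(H.meas i)

/-- The first moment of the total-variation decomposition of `H`,
`∑ i |λ_i| ∫_0^∞ y dF_i(y)`. -/
noncomputable def MixCDF.tvMoment (H : MixCDF) : ℝ :=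
  ∑ i, |H.coef i| * ∫ y, y ∂(H.meas i)

/-- The CDF of a measure on `ℝ`. -/
noncomputable def cdfOf (ν : Measure ℝ) (y : ℝ) : ℝ := (ν (Set.Iic y)).toReal

/-- For a CDF `F` (of the measure `ν`) perturbed by `t·H`, the value
`T_a(F + tH) = ∫_0^∞ 2y (F + tH)(y) d(F + tH)(y)` as a Riemann–Stieltjes integral. -/
noncomputable def Ta (ν : Measure ℝ) (t : ℝ) (H : MixCDF) : ℝ :=
  (∫ y, 2 * y * (cdfOf ν y + t * H.fn y) ∂ν)
    + t * H.integral (fun y => 2 * y * (cdfOf ν y + t * H.fn y))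

/-!
`T_a(F + tH)` is a quadratic polynomial in `t`, by bilinearity of `(G, K) ↦ ∫ 2y G dK`;
its linear coefficient is the candidate derivative and its quadratic coefficient
`∫ 2y H dH` is bounded by `2 ‖H‖_∞` times the first moment of the total variation of `H`,
so the remainder of the difference quotient is `O(t)` uniformly over bounded sets of `H`.
-/

lemma cdfOf_eq_cdf (ν : Measure ℝ) [IsProbabilityMeasure ν] : cdfOf ν = cdf ν :=
  funext fun y => (cdf_eq_real ν y).symm

lemma measurable_cdfOf (ν : Measure ℝ) [IsProbabilityMeasure ν] : Measurable (cdfOf ν) := by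
  rw [cdfOf_eq_cdf]
  exact (cdf ν).mono.measurable

lemma norm_cdfOf_le_one (ν : Measure ℝ) [IsProbabilityMeasure ν] (y : ℝ) :
    ‖cdfOf ν y‖ ≤ 1 := by
  rw [cdfOf_eq_cdf, Real.norm_of_nonneg (cdf_nonneg ν y)]
  exact cdf_le_one ν y

lemma ae_nonneg_of_measure_Iio_zero {μ : Measure ℝ} (h : μ (Set.Iio 0) = 0) :
    ∀ᵐ y ∂μ, 0 ≤ y := by
  rw [ae_iff]
  simp only [not_le]
  exact h

lemma integrable_two_mul_id_mul {μ : Measure ℝ} (hμ : Integrable (fun y : ℝ => y) μ)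
    {g : ℝ → ℝ} (hg : Measurable g) {M : ℝ} (hM : ∀ y, ‖g y‖ ≤ M) :
    Integrable (fun y => 2 * y * g y) μ :=
  (hμ.const_mul 2).mul_bdd hg.aestronglyMeasurable (ae_of_all _ hM)

namespace MixCDF

variable (H : MixCDF)

lemma fn_eq_sum_cdfOf : H.fn = fun y => ∑ i, H.coef i * cdfOf (H.meas i) y := rfl

lemma measurable_fn : Measurable H.fn := by
  have := H.prob
  rw [fn_eq_sum_cdfOf]
  exact Finset.measurable_sum _ fun i _ => (measurable_cdfOf _).const_mul _

lemma norm_fn_le (y : ℝ) : ‖H.fn y‖ ≤ ∑ i, |H.coef i| := by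
  have := H.prob
  rw [fn_eq_sum_cdfOf]
  refine (norm_sum_le _ _).trans (Finset.sum_le_sum fun i _ => ?_)
  rw [norm_mul, Real.norm_eq_abs]
  exact mul_le_of_le_one_right (abs_nonneg _) (norm_cdfOf_le_one _ y)

lemma integral_add_const_mul (t : ℝ) {g₁ g₂ : ℝ → ℝ}
    (h₁ : ∀ i, Integrable g₁ (H.meas i)) (h₂ : ∀ i, Integrable g₂ (H.meas i)) :
    H.integral (fun y => g₁ y + t * g₂ y) = H.integral g₁ + t * H.integral g₂ := by
  simp only [integral, Finset.mul_sum, ← Finset.sum_add_distrib]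
  refine Finset.sum_congr rfl fun i _ => ?_
  rw [integral_add (h₁ i) ((h₂ i).const_mul t), integral_const_mul]
  ring

lemma abs_integral_le_mul_tvMoment {g : ℝ → ℝ} {C : ℝ} (hg : ∀ y, 0 ≤ y → |g y| ≤ C * y) :
    |H.integral g| ≤ C * H.tvMoment := by
  have component : ∀ i, |∫ y, g y ∂(H.meas i)| ≤ C * ∫ y, y ∂(H.meas i) := fun i => by
    rw [← integral_const_mul C (fun y : ℝ => y), ← Real.norm_eq_abs]
    refine norm_integral_le_of_norm_le ((H.moment i).const_mul C) ?_
    filter_upwards [ae_nonneg_of_measure_Iio_zero (H.supp i)] with y hy using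
      (Real.norm_eq_abs _).trans_le (hg y hy)
  calc |H.integral g| ≤ ∑ i, |H.coef i| * |∫ y, g y ∂(H.meas i)| := by
        simp only [integral, ← abs_mul]
        exact Finset.abs_sum_le_sum_abs _ _
    _ ≤ ∑ i, |H.coef i| * (C * ∫ y, y ∂(H.meas i)) :=
        Finset.sum_le_sum fun i _ => mul_le_mul_of_nonneg_left (component i) (abs_nonneg _)
    _ = C * H.tvMoment := by
        simp only [tvMoment, Finset.mul_sum]
        exact Finset.sum_congr rfl fun i _ => by ring

end MixCDF

section Expansion

variable {ν : Measure ℝ} [IsProbabilityMeasure ν]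

lemma Ta_eq_quadratic (hνm : Integrable (fun y : ℝ => y) ν) (H : MixCDF) (t : ℝ) :
    Ta ν t H = (∫ y, 2 * y * cdfOf ν y ∂ν)
      + t * ((∫ y, 2 * y * H.fn y ∂ν) + H.integral (fun y => 2 * y * cdfOf ν y))
      + t ^ 2 * H.integral (fun y => 2 * y * H.fn y) := by
  have hF : ∀ {μ : Measure ℝ}, Integrable (fun y : ℝ => y) μ →
      Integrable (fun y => 2 * y * cdfOf ν y) μ := fun hμ =>
    integrable_two_mul_id_mul hμ (measurable_cdfOf ν) (norm_cdfOf_le_one ν)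
  have hH : ∀ {μ : Measure ℝ}, Integrable (fun y : ℝ => y) μ →
      Integrable (fun y => 2 * y * H.fn y) μ := fun hμ =>
    integrable_two_mul_id_mul hμ H.measurable_fn H.norm_fn_le
  have bilinear : (fun y => 2 * y * (cdfOf ν y + t * H.fn y))
      = fun y => 2 * y * cdfOf ν y + t * (2 * y * H.fn y) := by
    funext y; ring
  rw [Ta, bilinear, integral_add (hF hνm) ((hH hνm).const_mul t), integral_const_mul,
    H.integral_add_const_mul t (fun i => hF (H.moment i)) (fun i => hH (H.moment i))]
  ring

lemma Ta_difference_quotient (hνm : Integrable (fun y : ℝ => y) ν) (H : MixCDF) {t : ℝ}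
    (ht : t ≠ 0) :
    (Ta ν t H - Ta ν 0 H) / t
      = (∫ y, 2 * y * H.fn y ∂ν) + H.integral (fun y => 2 * y * cdfOf ν y)
          + t * H.integral (fun y => 2 * y * H.fn y) := by
  rw [Ta_eq_quadratic hνm, Ta_eq_quadratic hνm]
  field_simp
  ring

end Expansion

lemma MixCDF.abs_mul_integral_two_mul_fn_le (H : MixCDF) {t C₁ C₂ : ℝ}
    (hC₁ : ∀ y, |H.fn y| ≤ C₁) (hC₂ : H.tvMoment ≤ C₂) :
    |t * H.integral (fun y => 2 * y * H.fn y)| ≤ 2 * |t| * C₁ * C₂ := by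
  have hC₁_nonneg : 0 ≤ C₁ := (abs_nonneg _).trans (hC₁ 0)
  have growth : ∀ y, 0 ≤ y → |2 * y * H.fn y| ≤ 2 * C₁ * y := fun y hy => by
    rw [abs_mul, abs_mul, abs_two, abs_of_nonneg hy]
    nlinarith [hC₁ y]
  calc |t * H.integral (fun y => 2 * y * H.fn y)|
      ≤ |t| * (2 * C₁ * H.tvMoment) := by
        rw [abs_mul]
        exact mul_le_mul_of_nonneg_left (H.abs_integral_le_mul_tvMoment growth) (abs_nonneg t)
    _ ≤ |t| * (2 * C₁ * C₂) := by gcongr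
    _ = 2 * |t| * C₁ * C₂ := by ring

theorem Ta_hadamard_expansion_general
    (ν : Measure ℝ) [IsProbabilityMeasure ν]
    (hνm : Integrable (fun y : ℝ => y) ν) :
    (∀ (H : MixCDF) (t : ℝ), t ≠ 0 →
      (Ta ν t H - Ta ν 0 H) / t
        = (∫ y, 2 * y * H.fn y ∂ν) + H.integral (fun y => 2 * y * cdfOf ν y)
            + t * H.integral (fun y => 2 * y * H.fn y))
    ∧ (∀ (H : MixCDF) (t C₁ C₂ : ℝ), (∀ y : ℝ, |H.fn y| ≤ C₁) → H.tvMoment ≤ C₂ →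
        |t * H.integral (fun y => 2 * y * H.fn y)| ≤ 2 * |t| * C₁ * C₂)
    ∧ (∀ C₁ C₂ : ℝ, ∀ ε > (0 : ℝ), ∃ δ > (0 : ℝ), ∀ t : ℝ, t ≠ 0 → |t| < δ →
        ∀ H : MixCDF, (∀ y : ℝ, |H.fn y| ≤ C₁) → H.tvMoment ≤ C₂ →
          |(Ta ν t H - Ta ν 0 H) / t
              - ((∫ y, 2 * y * H.fn y ∂ν) + H.integral (fun y => 2 * y * cdfOf ν y))|
            ≤ ε) := by
  refine ⟨fun H t ht => Ta_difference_quotient hνm H ht,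
    fun H t C₁ C₂ hC₁ hC₂ => H.abs_mul_integral_two_mul_fn_le hC₁ hC₂, ?_⟩
  intro C₁ C₂ ε hε
  refine ⟨ε / (2 * |C₁| * |C₂| + 1), by positivity, fun t ht htδ H hC₁ hC₂ => ?_⟩
  rw [Ta_difference_quotient hνm H ht, add_sub_cancel_left]
  have remainder := H.abs_mul_integral_two_mul_fn_le (t := t) hC₁ hC₂
  have hC : C₁ * C₂ ≤ |C₁| * |C₂| := (le_abs_self _).trans (abs_mul _ _).le
  have ht' : |t| * (2 * |C₁| * |C₂| + 1) < ε := (lt_div_iff₀ (by positivity)).mp htδ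
  nlinarith [abs_nonneg t]

/-- **Exact expansion and remainder bound for the functional `T_a(F) = ∫ 2y F(y) dF(y)`.**
Let `F` be the CDF of a distribution `ν` of a non-negative random variable with finite
first moment, and let `H` be a finite linear combination of CDFs of non-negative random
variables with finite first moments. Then for every `t ≠ 0`,
`(T_a(F + tH) − T_a(F))/t = ∫ 2y H dF + ∫ 2y F dH + t ∫ 2y H dH`;
the remainder satisfies `|t ∫ 2y H dH| ≤ 2 |t| C₁ C₂` whenever `sup |H| ≤ C₁` and the
first moment of the total-variation decomposition of `H` is bounded by `C₂`; and
consequently the difference quotient converges to the linear map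
`H ↦ ∫ 2y H dF + ∫ 2y F dH` as `t → 0`, uniformly over such `H`. -/
theorem Ta_hadamard_expansion
    (ν : Measure ℝ) [IsProbabilityMeasure ν] (hν0 : ν (Set.Iio 0) = 0)
    (hνm : Integrable (fun y : ℝ => y) ν) :
    (∀ (H : MixCDF) (t : ℝ), t ≠ 0 →
      (Ta ν t H - Ta ν 0 H) / t
        = (∫ y, 2 * y * H.fn y ∂ν) + H.integral (fun y => 2 * y * cdfOf ν y)
            + t * H.integral (fun y => 2 * y * H.fn y))
    ∧ (∀ (H : MixCDF) (t C₁ C₂ : ℝ), (∀ y : ℝ, |H.fn y| ≤ C₁) → H.tvMoment ≤ C₂ →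
        |t * H.integral (fun y => 2 * y * H.fn y)| ≤ 2 * |t| * C₁ * C₂)
    ∧ (∀ C₁ C₂ : ℝ, ∀ ε > (0 : ℝ), ∃ δ > (0 : ℝ), ∀ t : ℝ, t ≠ 0 → |t| < δ →
        ∀ H : MixCDF, (∀ y : ℝ, |H.fn y| ≤ C₁) → H.tvMoment ≤ C₂ →
          |(Ta ν t H - Ta ν 0 H) / t
              - ((∫ y, 2 * y * H.fn y ∂ν) + H.integral (fun y => 2 * y * cdfOf ν y))|
            ≤ ε) :=
  Ta_hadamard_expansion_general ν hνm
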